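/- arXiv:1103.3756 — 5 statements merged into one kernel-verified Lean document; each statement's English description precedes it below -/
import Mathlib

section
/- Let G be a finite twin-free graph with no isolated vertices. Then the set of non-forced vertices of G is a dominating set of G. Consequently, if G has n vertices and maximum degree d, the number of non-forced vertices is at least n/(d+1). -/
open SimpleGraph

variable {V : Type*}

/-- Closed neighbourhood of a vertex. -/
def closedNbhd (G : SimpleGraph V) (v : V) : Set V := insert v (G.neighborSet v)

/-- `C` is a dominating set of `G`. -/
def Dominating (G : SimpleGraph V) (C : Set V) : Prop :=
  ∀ v, v ∉ C → ∃ u ∈ C, G.Adj v u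

/-- `C` is a separating set of `G`. -/
def Separating (G : SimpleGraph V) (C : Set V) : Prop :=
  ∀ u v : V, u ≠ v → closedNbhd G u ∩ C ≠ closedNbhd G v ∩ C

/-- `C` is an identifying code of `G`. -/
def IdCode (G : SimpleGraph V) (C : Set V) : Prop :=
  Dominating G C ∧ Separating G C

/-- `G` has no pair of twins. -/
def TwinFree (G : SimpleGraph V) : Prop :=
  ∀ u v : V, u ≠ v → closedNbhd G u ≠ closedNbhd G v

/-- A vertex is forced if it is the unique element of the symmetric difference of
two closed neighbourhoods. -/
def Forced (G : SimpleGraph V) (w : V) : Prop :=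
  ∃ u v : V, u ≠ v ∧ symmDiff (closedNbhd G u) (closedNbhd G v) = {w}

lemma mem_closedNbhd_comm (G : SimpleGraph V) {a b : V} :
    a ∈ closedNbhd G b ↔ b ∈ closedNbhd G a := by
  simp only [closedNbhd, Set.mem_insert_iff, mem_neighborSet]
  constructor
  · rintro (rfl | h)
    · exact Or.inl rfl
    · exact Or.inr h.symm
  · rintro (rfl | h)
    · exact Or.inl rfl
    · exact Or.inr h.symm

lemma mem_closedNbhd_self (G : SimpleGraph V) (a : V) : a ∈ closedNbhd G a :=
  Set.mem_insert _ _

lemma symmDiff_singleton_iff {A B : Set V} {v : V}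
    (h : symmDiff A B = {v}) (a : V) : a = v ↔ ((a ∈ A) ↔ ¬ a ∈ B) := by
  have := Set.ext_iff.mp h a
  simp only [Set.mem_symmDiff, Set.mem_singleton_iff] at this
  tauto

/-- Witness symmetry: if `v` is forced with witness pair `(x, y)` and `w` is forced with
witness pair `(x', y')`, and `w ∈ {x, y}`, then `v ∈ {x', y'}`. -/
lemma lemA (G : SimpleGraph V) {x y x' y' v w : V} (hxy : x ≠ y)
    (h1 : symmDiff (closedNbhd G x) (closedNbhd G y) = {v})
    (h2 : symmDiff (closedNbhd G x') (closedNbhd G y') = {w})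
    (hw : w = x ∨ w = y) : v = x' ∨ v = y' := by
  by_contra hcon
  push_neg at hcon
  obtain ⟨hvx', hvy'⟩ := hcon
  have p1 := symmDiff_singleton_iff h1 x'
  have p2 := symmDiff_singleton_iff h1 y'
  have q1 := symmDiff_singleton_iff h2 x
  have q2 := symmDiff_singleton_iff h2 y
  rw [← mem_closedNbhd_comm G (a := x') (b := x),
      ← mem_closedNbhd_comm G (a := y') (b := x)] at q1
  rw [← mem_closedNbhd_comm G (a := x') (b := y),
      ← mem_closedNbhd_comm G (a := y') (b := y)] at q2
  have hnx' : ¬ (x' = v) := fun h => hvx' h.symm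
  have hny' : ¬ (y' = v) := fun h => hvy' h.symm
  have hAB : (x' ∈ closedNbhd G x) ↔ (x' ∈ closedNbhd G y) := by
    have h' : ¬ ((x' ∈ closedNbhd G x) ↔ ¬ (x' ∈ closedNbhd G y)) :=
      fun hh => hnx' (p1.mpr hh)
    exact not_iff_not.mp (not_iff.mp h')
  have hCD : (y' ∈ closedNbhd G x) ↔ (y' ∈ closedNbhd G y) := by
    have h' : ¬ ((y' ∈ closedNbhd G x) ↔ ¬ (y' ∈ closedNbhd G y)) :=
      fun hh => hny' (p2.mpr hh)
    exact not_iff_not.mp (not_iff.mp h')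
  rcases hw with rfl | rfl
  · -- here `x` has been substituted by `w`
    have hq1 : (x' ∈ closedNbhd G w) ↔ ¬ (y' ∈ closedNbhd G w) := q1.mp rfl
    have hnyw : ¬ (y = w) := fun h => hxy h.symm
    have hq2 : (x' ∈ closedNbhd G y) ↔ (y' ∈ closedNbhd G y) := by
      have h' : ¬ ((x' ∈ closedNbhd G y) ↔ ¬ (y' ∈ closedNbhd G y)) :=
        fun hh => hnyw (q2.mpr hh)
      exact not_iff_not.mp (not_iff.mp h')
    have hAC : (x' ∈ closedNbhd G w) ↔ (y' ∈ closedNbhd G w) :=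
      hAB.trans (hq2.trans hCD.symm)
    exact iff_not_self (hAC.symm.trans hq1)
  · -- here `y` has been substituted by `w`
    have hq2 : (x' ∈ closedNbhd G w) ↔ ¬ (y' ∈ closedNbhd G w) := q2.mp rfl
    have hnxw : ¬ (x = w) := hxy
    have hq1 : (x' ∈ closedNbhd G x) ↔ (y' ∈ closedNbhd G x) := by
      have h' : ¬ ((x' ∈ closedNbhd G x) ↔ ¬ (y' ∈ closedNbhd G x)) :=
        fun hh => hnxw (q1.mpr hh)
      exact not_iff_not.mp (not_iff.mp h')
    have hBD : (x' ∈ closedNbhd G w) ↔ (y' ∈ closedNbhd G w) :=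
      hAB.symm.trans (hq1.trans hCD)
    exact iff_not_self (hBD.symm.trans hq2)

lemma forced_oriented {G : SimpleGraph V} {w : V} (h : Forced G w) :
    ∃ x y : V, x ≠ y ∧ w ∈ closedNbhd G x ∧ w ∉ closedNbhd G y ∧
      symmDiff (closedNbhd G x) (closedNbhd G y) = {w} := by
  obtain ⟨x, y, hxy, hs⟩ := h
  have hmem : w ∈ symmDiff (closedNbhd G x) (closedNbhd G y) := by
    rw [hs]; exact rfl
  rw [Set.mem_symmDiff] at hmem
  rcases hmem with ⟨h1, h2⟩ | ⟨h1, h2⟩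
  · exact ⟨x, y, hxy, h1, h2, hs⟩
  · exact ⟨y, x, hxy.symm, h1, h2, by rwa [symmDiff_comm]⟩

/-- If `v` is forced with oriented witness `(a, b)` (so `v ∈ N[a]`), and `a` is itself
forced, then `N[v] \ {a}` is again a closed neighbourhood. -/
lemma lemB (G : SimpleGraph V) {v a b : V} (hab : a ≠ b)
    (hva : v ∈ closedNbhd G a)
    (hs : symmDiff (closedNbhd G a) (closedNbhd G b) = {v})
    (hfa : Forced G a) :
    ∃ t, closedNbhd G t = closedNbhd G v \ {a} := by
  obtain ⟨c, d, hcd, hac, had, hs2⟩ := forced_oriented hfa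
  have haBv : a ∈ closedNbhd G v := (mem_closedNbhd_comm G).mp hva
  rcases lemA G hab hs hs2 (Or.inl rfl) with rfl | rfl
  · -- v = c : witness pair of `a` is (v, d), so N[d] = N[v] \ {a}
    refine ⟨d, ?_⟩
    ext z
    have hz := symmDiff_singleton_iff hs2 z
    simp only [Set.mem_diff, Set.mem_singleton_iff]
    by_cases hza : z = a
    · subst hza
      simp only [had, false_iff]
      tauto
    · have h2 : ¬ ((z ∈ closedNbhd G v) ↔ ¬ (z ∈ closedNbhd G d)) :=
        fun hh => hza (hz.mpr hh)
      have h3 : (z ∈ closedNbhd G v) ↔ (z ∈ closedNbhd G d) :=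
        not_iff_not.mp (not_iff.mp h2)
      exact ⟨fun hzd => ⟨h3.mpr hzd, hza⟩, fun h => h3.mp h.1⟩
  · -- v = d : contradiction since a ∉ N[d] = N[v]
    exact absurd haBv had

/-- Descent: it cannot be that all vertices of a closed neighbourhood are forced. -/
lemma descent [Fintype V] (G : SimpleGraph V) {u : V}
    (hall : ∀ w ∈ closedNbhd G u, Forced G w) : False := by
  suffices h : ∀ n (v : V), closedNbhd G v ⊆ closedNbhd G u →
      (closedNbhd G v).ncard ≤ n → False from
    h (closedNbhd G u).ncard u subset_rfl le_rfl
  intro n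
  induction n with
  | zero =>
    intro v hsub hc
    have hpos : 0 < (closedNbhd G v).ncard :=
      (Set.ncard_pos (Set.toFinite _)).mpr ⟨v, mem_closedNbhd_self G v⟩
    omega
  | succ n ih =>
    intro v hsub hc
    obtain ⟨a, b, hab, hva, hvb, hs⟩ :=
      forced_oriented (hall v (hsub (mem_closedNbhd_self G v)))
    have haBv : a ∈ closedNbhd G v := (mem_closedNbhd_comm G).mp hva
    obtain ⟨t, ht⟩ := lemB G hab hva hs (hall a (hsub haBv))
    apply ih t
    · rw [ht]; exact Set.diff_subset.trans hsub
    · rw [ht, Set.ncard_diff_singleton_of_mem haBv]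
      have hpos : 0 < (closedNbhd G v).ncard :=
        (Set.ncard_pos (Set.toFinite _)).mpr ⟨v, mem_closedNbhd_self G v⟩
      omega

theorem stmt6 [Fintype V] (G : SimpleGraph V) [DecidableRel G.Adj] (d : ℕ)
    (hTF : TwinFree G) (hiso : ∀ v : V, ∃ u, G.Adj v u)
    (hdeg : ∀ v, G.degree v ≤ d) :
    Dominating G {w : V | ¬ Forced G w} ∧
    Fintype.card V ≤ (d + 1) * Set.ncard {w : V | ¬ Forced G w} := by
  classical
  have hdom : Dominating G {w : V | ¬ Forced G w} := by
    intro v hv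
    have hfv : Forced G v := not_not.mp hv
    have hnall : ¬ ∀ w ∈ closedNbhd G v, Forced G w := fun h => descent G h
    push_neg at hnall
    obtain ⟨w, hwB, hwnf⟩ := hnall
    refine ⟨w, hwnf, ?_⟩
    simp only [closedNbhd, Set.mem_insert_iff, mem_neighborSet] at hwB
    rcases hwB with rfl | hadj
    · exact absurd hfv hwnf
    · exact hadj
  refine ⟨hdom, ?_⟩
  set NF : Set V := {w : V | ¬ Forced G w} with hNF
  have hcover : ∀ v : V, ∃ w ∈ NF, v ∈ closedNbhd G w := by
    intro v
    by_cases hv : v ∈ NF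
    · exact ⟨v, hv, mem_closedNbhd_self G v⟩
    · obtain ⟨w, hw, hadj⟩ := hdom v hv
      exact ⟨w, hw, Set.mem_insert_of_mem _ ((mem_neighborSet G w v).mpr hadj.symm)⟩
  have hsub : (Finset.univ : Finset V) ⊆
      NF.toFinset.biUnion (fun w => insert w (G.neighborFinset w)) := by
    intro v _
    obtain ⟨w, hw, hv⟩ := hcover v
    refine Finset.mem_biUnion.mpr ⟨w, Set.mem_toFinset.mpr hw, ?_⟩
    simp only [closedNbhd, Set.mem_insert_iff, mem_neighborSet] at hv
    rcases hv with rfl | h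
    · exact Finset.mem_insert_self _ _
    · exact Finset.mem_insert_of_mem ((mem_neighborFinset G w v).mpr h)
  have hball : ∀ w : V, (insert w (G.neighborFinset w)).card ≤ d + 1 := by
    intro w
    calc (insert w (G.neighborFinset w)).card ≤ (G.neighborFinset w).card + 1 :=
          Finset.card_insert_le _ _
      _ = G.degree w + 1 := rfl
      _ ≤ d + 1 := Nat.add_le_add_right (hdeg w) 1
  have hcard : Fintype.card V ≤ NF.toFinset.card * (d + 1) := by
    calc Fintype.card V = (Finset.univ : Finset V).card := (Finset.card_univ).symm
      _ ≤ (NF.toFinset.biUnion (fun w => insert w (G.neighborFinset w))).card :=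
          Finset.card_le_card hsub
      _ ≤ ∑ w ∈ NF.toFinset, (insert w (G.neighborFinset w)).card :=
          Finset.card_biUnion_le
      _ ≤ ∑ _w ∈ NF.toFinset, (d + 1) := Finset.sum_le_sum (fun w _ => hball w)
      _ = NF.toFinset.card * (d + 1) := by rw [Finset.sum_const, smul_eq_mul]
  have hn : NF.ncard = NF.toFinset.card := Set.ncard_eq_toFinset_card' NF
  rw [hn]
  exact le_of_le_of_eq hcard (Nat.mul_comm _ _)
end

section
/- If G is a finite twin-free graph without isolated vertices, then for every vertex u of G there exists a vertex v ∈ N[u] such that V(G)∖{v} is an identifying code of G. -/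
open SimpleGraph

variable {V : Type*}

lemma closedNbhd_mem_comm (G : SimpleGraph V) {x w : V} :
    x ∈ closedNbhd G w ↔ w ∈ closedNbhd G x := by
  simp only [closedNbhd, Set.mem_insert_iff, mem_neighborSet]
  constructor
  · rintro (rfl | h)
    · exact Or.inl rfl
    · exact Or.inr h.symm
  · rintro (rfl | h)
    · exact Or.inl rfl
    · exact Or.inr h.symm

lemma self_mem_closedNbhd (G : SimpleGraph V) (w : V) : w ∈ closedNbhd G w :=
  Set.mem_insert _ _

lemma reconstruct_insert {S T : Set V} {v : V} (h : S \ {v} = T \ {v})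
    (hS : v ∈ S) (hT : v ∉ T) : S = insert v T := by
  ext x
  by_cases hx : x = v
  · subst hx; simp [hS]
  · have h' := Set.ext_iff.1 h x
    simp only [Set.mem_diff, Set.mem_singleton_iff, hx] at h'
    simp only [Set.mem_insert_iff, hx, false_or]
    tauto

/-- The key parity lemma: it is impossible that every vertex of `N[u]` is "forced". -/
lemma no_all_forced [Fintype V] (G : SimpleGraph V) (u : V) (a b : V → V)
    (hb : ∀ v ∈ closedNbhd G u, v ∉ closedNbhd G (b v))
    (hab : ∀ v ∈ closedNbhd G u, closedNbhd G (a v) = insert v (closedNbhd G (b v))) :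
    False := by
  classical
  have two : (1 + 1 : ZMod 2) = 0 := by decide
  have sq : ∀ x : ZMod 2, x * x = x := by decide
  set t : Finset V := Finset.univ.filter (fun v => v ∈ closedNbhd G u) with ht
  set M : V → V → ZMod 2 := fun w x => if x ∈ closedNbhd G w then 1 else 0 with hM
  set f : V → ZMod 2 := fun x =>
    (if x = u then 1 else 0) +
      ∑ v ∈ t, ((if x = a v then 1 else 0) + (if x = b v then 1 else 0)) with hf
  have key : ∀ c : V, (∑ x : V, (if x = c then (1 : ZMod 2) else 0)) = 1 := by
    intro c
    rw [Finset.sum_ite_eq' Finset.univ c (fun _ => (1 : ZMod 2))]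
    simp
  -- (1) total sum of f is 1
  have h1 : ∑ x : V, f x = 1 := by
    rw [hf]
    rw [Finset.sum_add_distrib, key, Finset.sum_comm]
    have : ∀ v ∈ t, (∑ x : V, ((if x = a v then (1 : ZMod 2) else 0) +
        (if x = b v then 1 else 0))) = 0 := by
      intro v _
      rw [Finset.sum_add_distrib, key, key, two]
    rw [Finset.sum_congr rfl this]
    simp
  have Msymm : ∀ w x, M w x = M x w := by
    intro w x
    simp only [hM]
    exact if_congr (closedNbhd_mem_comm G) rfl rfl
  -- (2) f is in the kernel of the closed neighbourhood matrix
  have h2 : ∀ w : V, ∑ x : V, M w x * f x = 0 := by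
    intro w
    have expand : ∀ x : V, M w x * f x =
        M w x * (if x = u then 1 else 0) +
          ∑ v ∈ t, (M w x * (if x = a v then 1 else 0) + M w x * (if x = b v then 1 else 0)) := by
      intro x
      rw [hf, mul_add, Finset.mul_sum]
      simp [mul_add]
    have key2 : ∀ c : V, (∑ x : V, M w x * (if x = c then (1 : ZMod 2) else 0)) = M w c := by
      intro c
      simp only [mul_ite, mul_one, mul_zero]
      rw [Finset.sum_ite_eq' Finset.univ c (fun x => M w x)]
      simp
    rw [Finset.sum_congr rfl (fun x _ => expand x), Finset.sum_add_distrib, key2,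
      Finset.sum_comm]
    have hpair : ∀ v ∈ t, (∑ x : V, (M w x * (if x = a v then (1 : ZMod 2) else 0) +
        M w x * (if x = b v then 1 else 0))) = if w = v then 1 else 0 := by
      intro v hv
      have hv' : v ∈ closedNbhd G u := by simpa [ht] using hv
      rw [Finset.sum_add_distrib, key2, key2]
      simp only [hM]
      have e1 : (a v ∈ closedNbhd G w) ↔ (w = v ∨ w ∈ closedNbhd G (b v)) := by
        rw [closedNbhd_mem_comm, hab v hv', Set.mem_insert_iff]
      have e2 : (b v ∈ closedNbhd G w) ↔ w ∈ closedNbhd G (b v) := closedNbhd_mem_comm G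
      rw [if_congr e1 rfl rfl, if_congr e2 rfl rfl]
      by_cases h1' : w = v
      · subst h1'
        simp [hb _ hv']
      · by_cases h2' : w ∈ closedNbhd G (b v) <;> simp [h1', h2', two]
    rw [Finset.sum_congr rfl hpair]
    rw [Finset.sum_ite_eq t w (fun _ => (1 : ZMod 2))]
    have hmem : (w ∈ t) ↔ u ∈ closedNbhd G w := by
      simp only [ht, Finset.mem_filter, Finset.mem_univ, true_and]
      exact closedNbhd_mem_comm G
    simp only [hM]
    by_cases hw : u ∈ closedNbhd G w
    · rw [if_pos hw, if_pos (hmem.2 hw), two]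
    · rw [if_neg hw, if_neg (fun h => hw (hmem.1 h)), add_zero]
  -- (3) quadratic form computation
  set F : V × V → ZMod 2 := fun p => f p.1 * (M p.1 p.2 * f p.2) with hF
  have h3 : ∑ p ∈ Finset.univ ×ˢ Finset.univ, F p = 0 := by
    rw [Finset.sum_product]
    refine Finset.sum_eq_zero fun w _ => ?_
    simp only [hF]
    rw [← Finset.mul_sum, h2 w, mul_zero]
  have h4 : ∑ p ∈ Finset.univ ×ˢ Finset.univ, F p = 1 := by
    rw [← Finset.diag_union_offDiag (Finset.univ : Finset V),
      Finset.sum_union (Finset.disjoint_diag_offDiag _), Finset.sum_diag]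
    have hdiag : ∀ w : V, F (w, w) = f w := by
      intro w
      simp only [hF, hM]
      rw [if_pos (self_mem_closedNbhd G w), one_mul, sq]
    have hoff : ∑ p ∈ (Finset.univ : Finset V).offDiag, F p = 0 := by
      have hFswap : ∀ p : V × V, F p.swap = F p := by
        intro p
        simp only [hF, Prod.fst_swap, Prod.snd_swap, Msymm p.2 p.1]
        ring
      refine Finset.sum_involution (fun p _ => p.swap) ?_ ?_ ?_ ?_
      · intro p _
        rw [hFswap, CharTwo.add_self_eq_zero]
      · intro p hp _
        have hne := (Finset.mem_offDiag.1 hp).2.2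
        intro hsw
        exact hne ((Prod.ext_iff.1 hsw).2)
      · intro p hp
        have h' := Finset.mem_offDiag.1 hp
        exact Finset.mem_offDiag.2 ⟨h'.2.1, h'.1, h'.2.2.symm⟩
      · intro p _
        exact Prod.swap_swap p
    rw [hoff, add_zero, Finset.sum_congr rfl (fun w _ => hdiag w), h1]
  rw [h3] at h4
  exact absurd h4 (by decide)

theorem stmt7 [Fintype V] (G : SimpleGraph V) (hTF : TwinFree G)
    (hiso : ∀ v : V, ∃ u, G.Adj v u) (u : V) :
    ∃ v ∈ closedNbhd G u, IdCode G ((Set.univ : Set V) \ {v}) := by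
  classical
  by_contra hcon
  push_neg at hcon
  have forced : ∀ v : V, ∃ p : V × V, v ∈ closedNbhd G u →
      v ∉ closedNbhd G (p.2) ∧ closedNbhd G p.1 = insert v (closedNbhd G p.2) := by
    intro v
    by_cases hv : v ∈ closedNbhd G u
    · have hnid := hcon v hv
      have hdom : Dominating G ((Set.univ : Set V) \ {v}) := by
        intro w hw
        have hwv : w = v := by
          by_contra h
          exact hw ⟨Set.mem_univ w, h⟩
        subst hwv
        obtain ⟨u', hu'⟩ := hiso w
        exact ⟨u', ⟨Set.mem_univ u', fun h => G.ne_of_adj hu' (h : u' = w).symm⟩, hu'⟩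
      have hnsep : ¬ Separating G ((Set.univ : Set V) \ {v}) := fun hs => hnid ⟨hdom, hs⟩
      simp only [Separating, not_forall] at hnsep
      obtain ⟨x, y, hxy, heq⟩ := hnsep
      have heq' : closedNbhd G x ∩ ((Set.univ : Set V) \ {v})
          = closedNbhd G y ∩ ((Set.univ : Set V) \ {v}) := not_not.1 heq
      have hinter : ∀ S : Set V, S ∩ ((Set.univ : Set V) \ {v}) = S \ {v} := by
        intro S; ext z; simp [Set.mem_diff]
      have hdiff : closedNbhd G x \ {v} = closedNbhd G y \ {v} := by
        rw [hinter, hinter] at heq'; exact heq'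
      have hne := hTF x y hxy
      by_cases hx : v ∈ closedNbhd G x
      · by_cases hy : v ∈ closedNbhd G y
        · exfalso
          apply hne
          ext z
          by_cases hz : z = v
          · subst hz
            exact ⟨fun _ => hy, fun _ => hx⟩
          · have hzz := Set.ext_iff.1 hdiff z
            simp only [Set.mem_diff, Set.mem_singleton_iff, hz, not_false_iff,
              and_true] at hzz
            exact hzz
        · exact ⟨(x, y), fun _ => ⟨hy, reconstruct_insert hdiff hx hy⟩⟩
      · by_cases hy : v ∈ closedNbhd G y
        · exact ⟨(y, x), fun _ => ⟨hx, reconstruct_insert hdiff.symm hy hx⟩⟩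
        · exfalso
          apply hne
          ext z
          by_cases hz : z = v
          · subst hz
            exact ⟨fun h => absurd h hx, fun h => absurd h hy⟩
          · have hzz := Set.ext_iff.1 hdiff z
            simp only [Set.mem_diff, Set.mem_singleton_iff, hz, not_false_iff,
              and_true] at hzz
            exact hzz
    · exact ⟨(v, v), fun h => absurd h hv⟩
  choose p hp using forced
  exact no_all_forced G u (fun v => (p v).1) (fun v => (p v).2)
    (fun v hv => (hp v hv).1) (fun v hv => (hp v hv).2)
end

section
/- Let G be a twin-free graph, s = f(u→v) for an arc u→v of H(G), and let t be an in-neighbour of s in H(G) such that t is itself forced with t = f(x→y) for some arc x→y. Then x = v. -/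
open SimpleGraph

variable {V : Type*}

lemma closedNbhd_comm {G : SimpleGraph V} {a b : V} :
    a ∈ closedNbhd G b ↔ b ∈ closedNbhd G a := by
  simp only [closedNbhd, Set.mem_insert_iff, mem_neighborSet]
  constructor
  · rintro (rfl | h); · left; rfl
    · exact Or.inr h.symm
  · rintro (rfl | h); · left; rfl
    · exact Or.inr h.symm

theorem stmt11 (G : SimpleGraph V) (hTF : TwinFree G) (u v s t x y : V)
    (hs : s ∉ closedNbhd G u)
    (huv : closedNbhd G v = insert s (closedNbhd G u))
    (hts : ∃ z, z ∉ closedNbhd G t ∧ closedNbhd G s = insert z (closedNbhd G t))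
    (ht : t ∉ closedNbhd G x)
    (hxy : closedNbhd G y = insert t (closedNbhd G x)) :
    x = v := by
  obtain ⟨z, hz1, hz2⟩ := hts
  -- s ≠ t
  have hzs : z ∈ closedNbhd G s := hz2 ▸ Set.mem_insert _ _
  have hst : s ≠ t := by
    rintro rfl
    exact hz1 hzs
  -- u ∉ N[s]
  have hus : u ∉ closedNbhd G s := fun h => hs (closedNbhd_comm.mp h)
  -- N[t] ⊆ N[s]
  have hsub : closedNbhd G t ⊆ closedNbhd G s := hz2 ▸ Set.subset_insert _ _
  -- x ∉ N[t]
  have hxt : x ∉ closedNbhd G t := fun h => ht (closedNbhd_comm.mp h)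
  -- x ∈ N[s]
  have hty : t ∈ closedNbhd G y := hxy ▸ Set.mem_insert _ _
  have hyt : y ∈ closedNbhd G t := closedNbhd_comm.mp hty
  have hys : y ∈ closedNbhd G s := hsub hyt
  have hsy : s ∈ closedNbhd G y := closedNbhd_comm.mp hys
  have hsx : s ∈ closedNbhd G x := by
    rw [hxy] at hsy
    rcases hsy with h | h
    · exact absurd h hst
    · exact h
  have hxs : x ∈ closedNbhd G s := closedNbhd_comm.mp hsx
  -- z = v
  have hsv : s ∈ closedNbhd G v := huv ▸ Set.mem_insert _ _
  have hvs : v ∈ closedNbhd G s := closedNbhd_comm.mp hsv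
  have hzv : z = v := by
    rw [hz2] at hvs
    rcases hvs with h | h
    · exact h.symm
    · -- v ∈ N[t] : then t ∈ N[v] = insert s N[u]
      have htv : t ∈ closedNbhd G v := closedNbhd_comm.mp h
      rw [huv] at htv
      rcases htv with h' | h'
      · exact absurd h'.symm hst
      · exact absurd (hsub (closedNbhd_comm.mp h')) hus
  -- conclude
  rw [hz2, hzv] at hxs
  rcases hxs with h | h
  · exact h
  · exact absurd h hxt
end

section
/- Let G be a twin-free graph of girth at least 5 and let D ⊆ V(G) be a 2-dominating set (every vertex outside D has at least 2 neighbours in D) such that the induced subgraph G[D] has no isolated edge (no edge uv of G[D] with both u and v having no other neighbour in D). Then D is an identifying code of G. -/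
open SimpleGraph

variable {V : Type*}

lemma girth_le_of_cycle {G : SimpleGraph V} {a : V} {w : G.Walk a a}
    (hw : w.IsCycle) : G.girth ≤ w.length := by
  have h : G.egirth ≤ w.length := le_egirth.mp le_rfl a w hw
  calc G.girth = G.egirth.toNat := rfl
    _ ≤ (w.length : ℕ∞).toNat := ENat.toNat_le_toNat h (by simp)
    _ = w.length := by simp

lemma no_triangle {G : SimpleGraph V} (hg : 5 ≤ G.girth) {a b c : V}
    (hab : G.Adj a b) (hbc : G.Adj b c) (hca : G.Adj c a) : False := by
  have h1 := hab.ne; have h2 := hbc.ne; have h3 := hca.ne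
  have hcyc : (Walk.cons hab (Walk.cons hbc (Walk.cons hca Walk.nil))).IsCycle := by
    simp [Walk.isCycle_def, Walk.isTrail_def]
    tauto
  have := girth_le_of_cycle hcyc
  simp [Walk.length_cons] at this
  omega

lemma no_square {G : SimpleGraph V} (hg : 5 ≤ G.girth) {u a v b : V}
    (huv : u ≠ v) (hab : a ≠ b)
    (h1 : G.Adj u a) (h2 : G.Adj a v) (h3 : G.Adj v b) (h4 : G.Adj b u) : False := by
  have n1 := h1.ne; have n2 := h2.ne; have n3 := h3.ne; have n4 := h4.ne
  have hcyc : (Walk.cons h1 (Walk.cons h2 (Walk.cons h3 (Walk.cons h4 Walk.nil)))).IsCycle := by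
    simp [Walk.isCycle_def, Walk.isTrail_def]
    tauto
  have := girth_le_of_cycle hcyc
  simp [Walk.length_cons] at this
  omega

lemma two_nbrs [Finite V] {G : SimpleGraph V} {D : Set V} {v : V}
    (h : 2 ≤ (G.neighborSet v ∩ D).ncard) :
    ∃ a b, a ≠ b ∧ a ∈ D ∧ b ∈ D ∧ G.Adj v a ∧ G.Adj v b := by
  obtain ⟨a, b, ha, hb, hab⟩ := (Set.one_lt_ncard_iff (Set.toFinite _)).mp h
  exact ⟨a, b, hab, ha.2, hb.2, ha.1, hb.1⟩

theorem stmt12 [Fintype V] (G : SimpleGraph V) (hTF : TwinFree G)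
    (hgirth : 5 ≤ G.girth) (D : Set V)
    (h2dom : ∀ v : V, v ∉ D → 2 ≤ (G.neighborSet v ∩ D).ncard)
    (hnoiso : ∀ u v : V, u ∈ D → v ∈ D → G.Adj u v →
      (∃ w ∈ D, w ≠ v ∧ G.Adj u w) ∨ (∃ w ∈ D, w ≠ u ∧ G.Adj v w)) :
    IdCode G D := by
  constructor
  · intro v hv
    obtain ⟨a, b, hab, haD, _, hva, _⟩ := two_nbrs (h2dom v hv)
    exact ⟨a, haD, hva⟩
  · -- Separating
    have key : ∀ u v : V, u ≠ v → u ∈ D →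
        closedNbhd G u ∩ D ≠ closedNbhd G v ∩ D := by
      intro u v huv huD heq
      have huu : u ∈ closedNbhd G u ∩ D := ⟨Set.mem_insert _ _, huD⟩
      have huv' : u ∈ closedNbhd G v ∩ D := heq ▸ huu
      have hadj : G.Adj v u := by
        rcases huv'.1 with h | h
        · exact absurd h huv
        · exact h
      by_cases hvD : v ∈ D
      · -- both in D, adjacent; use no isolated edge
        rcases hnoiso v u hvD huD hadj with ⟨w, hwD, hwu, hvw⟩ | ⟨w, hwD, hwv, huw⟩
        · -- w ≠ u, Adj v w, so w ∈ N[v]∩D = N[u]∩D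
          have hm : w ∈ closedNbhd G u ∩ D := heq ▸ ⟨Set.mem_insert_iff.mpr (Or.inr hvw), hwD⟩
          rcases hm.1 with h | h
          · exact hwu h
          · exact no_triangle hgirth ((G.mem_neighborSet u w).mp h) hvw.symm hadj
        · have hm : w ∈ closedNbhd G v ∩ D := heq ▸ ⟨Set.mem_insert_iff.mpr (Or.inr huw), hwD⟩
          rcases hm.1 with h | h
          · exact hwv h
          · exact no_triangle hgirth huw ((G.mem_neighborSet v w).mp h).symm hadj
      · -- v ∉ D: has two neighbours in D, both in N[u]∩D → triangle
        obtain ⟨a, b, hab, haD, hbD, hva, hvb⟩ := two_nbrs (h2dom v hvD)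
        have ha' : a ∈ closedNbhd G u ∩ D := heq ▸ ⟨Set.mem_insert_iff.mpr (Or.inr hva), haD⟩
        have hb' : b ∈ closedNbhd G u ∩ D := heq ▸ ⟨Set.mem_insert_iff.mpr (Or.inr hvb), hbD⟩
        -- a and b: each is u itself or adjacent to u
        rcases ha'.1 with ha | ha <;> rcases hb'.1 with hb | hb
        · exact hab (ha.trans hb.symm)
        · exact no_triangle hgirth hvb ((G.mem_neighborSet u b).mp hb).symm (ha ▸ hva).symm
        · exact no_triangle hgirth hva ((G.mem_neighborSet u a).mp ha).symm (hb ▸ hvb).symm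
        · exact no_square hgirth huv hab ((G.mem_neighborSet u a).mp ha) hva.symm
            hvb ((G.mem_neighborSet u b).mp hb).symm
    intro u v huv heq
    by_cases huD : u ∈ D
    · exact key u v huv huD heq
    by_cases hvD : v ∈ D
    · exact key v u huv.symm hvD heq.symm
    -- neither in D: two common neighbours → square (or issues)
    obtain ⟨a, b, hab, haD, hbD, hua, hub⟩ := two_nbrs (h2dom u huD)
    have ha' : a ∈ closedNbhd G v ∩ D := heq ▸ ⟨Set.mem_insert_iff.mpr (Or.inr hua), haD⟩
    have hb' : b ∈ closedNbhd G v ∩ D := heq ▸ ⟨Set.mem_insert_iff.mpr (Or.inr hub), hbD⟩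
    have hva : G.Adj v a := by
      rcases ha'.1 with h | h
      · exact absurd (h ▸ haD) hvD
      · exact h
    have hvb : G.Adj v b := by
      rcases hb'.1 with h | h
      · exact absurd (h ▸ hbD) hvD
      · exact h
    exact no_square hgirth huv hab hua hva.symm hvb hub.symm
end

section
/- Let G be a twin-free graph on n vertices with maximum degree d. Then every identifying code C of G satisfies |C| ≥ 2n/(d+2). -/
open SimpleGraph

variable {V : Type*}

theorem stmt17 [Fintype V] (G : SimpleGraph V) [DecidableRel G.Adj]
    (hTF : TwinFree G) (d : ℕ) (hdeg : ∀ v, G.degree v ≤ d)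
    (C : Set V) (hC : IdCode G C) :
    2 * Fintype.card V ≤ (d + 2) * C.ncard := by
  classical
  obtain ⟨hDom, hSep⟩ := hC
  have hfin : C.Finite := Set.toFinite C
  set F : Finset V := hfin.toFinset with hFdef
  have hFcard : C.ncard = F.card := Set.ncard_eq_toFinset_card C hfin
  set f : V → Finset V := fun v => F.filter (fun c => c ∈ closedNbhd G v) with hfdef
  have hmem : ∀ v c, c ∈ f v ↔ c ∈ C ∧ c ∈ closedNbhd G v := by
    intro v c
    simp only [hfdef, Finset.mem_filter, Set.Finite.mem_toFinset, hFdef]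
  -- every vertex is dominated
  have h1 : ∀ v, (f v).Nonempty := by
    intro v
    by_cases hv : v ∈ C
    · exact ⟨v, (hmem v v).2 ⟨hv, Or.inl rfl⟩⟩
    · obtain ⟨u, hu, hadj⟩ := hDom v hv
      exact ⟨u, (hmem v u).2 ⟨hu, Or.inr hadj⟩⟩
  -- coe of f v
  have hcoe : ∀ v, (↑(f v) : Set V) = closedNbhd G v ∩ C := by
    intro v
    ext c
    simp only [Finset.mem_coe, hmem, Set.mem_inter_iff]
    tauto
  -- injection from vertices with |f v| = 1 into F
  set A : Finset V := Finset.univ.filter (fun v => (f v).card = 1) with hAdef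
  set g : V → V := fun v => (h1 v).choose with hgdef
  have hgmem : ∀ v, g v ∈ f v := fun v => (h1 v).choose_spec
  have hAcard : A.card ≤ F.card := by
    apply Finset.card_le_card_of_injOn g
    · intro v _
      exact Finset.mem_filter.mp (hgmem v) |>.1
    · intro v hv w hw hgvw
      obtain ⟨cv, hcv⟩ := Finset.card_eq_one.mp (Finset.mem_filter.mp hv).2
      obtain ⟨cw, hcw⟩ := Finset.card_eq_one.mp (Finset.mem_filter.mp hw).2
      have hv' : g v = cv := by
        have := hgmem v; rw [hcv, Finset.mem_singleton] at this; exact this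
      have hw' : g w = cw := by
        have := hgmem w; rw [hcw, Finset.mem_singleton] at this; exact this
      by_contra hne
      apply hSep v w hne
      rw [← hcoe v, ← hcoe w, hcv, hcw]
      rw [hv', hw'] at hgvw
      rw [hgvw]
  -- the sum
  set S : ℕ := ∑ v : V, (f v).card with hSdef
  -- lower bound
  have hlow : 2 * Fintype.card V ≤ S + A.card := by
    have hA : A.card = ∑ v : V, (if (f v).card = 1 then 1 else 0) := by
      rw [hAdef, Finset.card_filter]
    have : (2 : ℕ) * Fintype.card V = ∑ v : V, 2 := by
      rw [Finset.sum_const, Finset.card_univ, smul_eq_mul, mul_comm]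
    rw [this, hSdef, hA, ← Finset.sum_add_distrib]
    apply Finset.sum_le_sum
    intro v _
    have h1v : 1 ≤ (f v).card := Finset.card_pos.mpr (h1 v)
    split_ifs with h
    · omega
    · omega
  -- upper bound
  have hswap : ∀ v c, c ∈ closedNbhd G v ↔ v ∈ closedNbhd G c := by
    intro v c
    simp only [closedNbhd, Set.mem_insert_iff, mem_neighborSet]
    rw [eq_comm, G.adj_comm]
  have hup : S ≤ (d + 1) * F.card := by
    have : S = ∑ c ∈ F, (Finset.univ.filter (fun v => c ∈ closedNbhd G v)).card := by
      rw [hSdef]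
      simp only [hfdef, Finset.card_filter]
      rw [Finset.sum_comm]
    rw [this]
    calc ∑ c ∈ F, (Finset.univ.filter (fun v => c ∈ closedNbhd G v)).card
        ≤ ∑ _c ∈ F, (d + 1) := by
          apply Finset.sum_le_sum
          intro c _
          have heq : Finset.univ.filter (fun v => c ∈ closedNbhd G v)
              = insert c (G.neighborFinset c) := by
            ext v
            simp only [Finset.mem_filter, Finset.mem_univ, true_and, Finset.mem_insert,
              mem_neighborFinset, hswap, closedNbhd, Set.mem_insert_iff, mem_neighborSet]
            rw [eq_comm, G.adj_comm]
          rw [heq]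
          have := hdeg c
          calc (insert c (G.neighborFinset c)).card
              ≤ (G.neighborFinset c).card + 1 := Finset.card_insert_le _ _
            _ = G.degree c + 1 := by rw [card_neighborFinset_eq_degree]
            _ ≤ d + 1 := by omega
      _ = (d + 1) * F.card := by rw [Finset.sum_const, smul_eq_mul, mul_comm]
  rw [hFcard]
  calc 2 * Fintype.card V ≤ S + A.card := hlow
    _ ≤ (d + 1) * F.card + F.card := Nat.add_le_add hup hAcard
    _ = (d + 2) * F.card := by ring
end
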